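/- Suppose each f_i : ℝ^p → ℝ is differentiable and quasi-strongly convex at a fixed point x̄* ∈ ℝ^p with constant S_i > 0: S_i‖x̄* − y‖² ≤ ⟨∇f_i(x̄*) − ∇f_i(y), x̄* − y⟩ for all y ∈ ℝ^p; set S_f := min_i S_i. Let φ ∈ ℝ^n have strictly positive entries, D := n·diag(φ), x* := 1_n(x̄*)^T, and z* := D x*. Define g(z) := D^{-1}∇f(D^{-1}z) for z ∈ ℝ^{n×p}. Then for all z ∈ ℝ^{n×p}: μ̄‖z* − z‖² ≤ ⟨g(z*) − g(z), z* − z⟩, where μ̄ := S_f/σ_max(D)² and σ_max(D) := n·max_i φ_i is the largest singular value of D. -/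

import Mathlib

open Matrix RealInnerProductSpace

/-- Frobenius (trace) inner product of two real matrices. -/
noncomputable def frob {m q : Type*} [Fintype m] [Fintype q]
    (X Y : Matrix m q ℝ) : ℝ := ∑ i, ∑ j, X i j * Y i j

/-- Frobenius norm of a real matrix. -/
noncomputable def fnorm {m q : Type*} [Fintype m] [Fintype q]
    (X : Matrix m q ℝ) : ℝ := Real.sqrt (frob X X)

/-- The rows of the gradient matrix `∇f(x)` are the gradients `∇fᵢ(x₍ᵢ₎)`. -/
noncomputable def gradMat {n p : ℕ}
    (g : Fin n → EuclideanSpace ℝ (Fin p) → EuclideanSpace ℝ (Fin p))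
    (x : Matrix (Fin n) (Fin p) ℝ) : Matrix (Fin n) (Fin p) ℝ :=
  Matrix.of fun i j => g i ((WithLp.equiv 2 (Fin p → ℝ)).symm (x i)) j

/-!
Write `z = D y`. Because `D` is diagonal, `D⁻¹` and `D` cancel in the trace pairing, so
`⟨g(z*) - g(z), z* - z⟩ = ⟨∇f(x*) - ∇f(y), x* - y⟩`, which row by row is at least
`S_f ‖x* - y‖²` by quasi-strong convexity. On the other side
`‖z* - z‖ = ‖D (x* - y)‖ ≤ σ_max(D) ‖x* - y‖`.
-/

section Frobenius

variable {m q : Type*} [Fintype m] [Fintype q]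

lemma frob_eq_sum_inner_rows (X Y : Matrix m q ℝ) :
    frob X Y = ∑ i, ⟪WithLp.toLp 2 (X i), WithLp.toLp 2 (Y i)⟫ := by
  simp only [frob, PiLp.inner_apply, RCLike.inner_apply, conj_trivial]
  exact Finset.sum_congr rfl fun i _ => Finset.sum_congr rfl fun j _ => mul_comm _ _

lemma fnorm_sq (X : Matrix m q ℝ) : fnorm X ^ 2 = ∑ i, ‖WithLp.toLp 2 (X i)‖ ^ 2 := by
  have hnonneg : 0 ≤ frob X X :=
    Finset.sum_nonneg fun i _ => Finset.sum_nonneg fun j _ => mul_self_nonneg _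
  rw [fnorm, Real.sq_sqrt hnonneg, frob_eq_sum_inner_rows]
  simp only [real_inner_self_eq_norm_sq]

lemma frob_eq_trace (X Y : Matrix m q ℝ) : frob X Y = (Xᵀ * Y).trace := by
  simp only [frob, Matrix.trace, Matrix.diag, Matrix.mul_apply, Matrix.transpose_apply]
  exact Finset.sum_comm

lemma frob_mul_left (M : Matrix m m ℝ) (X Y : Matrix m q ℝ) :
    frob (M * X) Y = frob X (Mᵀ * Y) := by
  rw [frob_eq_trace, frob_eq_trace, Matrix.transpose_mul, Matrix.mul_assoc]

lemma isUnit_det_diagonal [DecidableEq m] {d : m → ℝ} (hd : ∀ i, d i ≠ 0) :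
    IsUnit (Matrix.diagonal d).det := by
  simpa [Matrix.det_diagonal, Finset.prod_ne_zero_iff] using hd

lemma frob_diagonal_inv_mul_diagonal_mul [DecidableEq m] {d : m → ℝ} (hd : ∀ i, d i ≠ 0)
    (X Y : Matrix m q ℝ) :
    frob ((Matrix.diagonal d)⁻¹ * X) (Matrix.diagonal d * Y) = frob X Y := by
  rw [frob_mul_left, Matrix.transpose_nonsing_inv, Matrix.diagonal_transpose,
    Matrix.nonsing_inv_mul_cancel_left (A := Matrix.diagonal d) _ (isUnit_det_diagonal hd)]

lemma fnorm_diagonal_mul_sq_le [DecidableEq m] {d : m → ℝ} {c : ℝ} (hd : ∀ i, |d i| ≤ c)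
    (X : Matrix m q ℝ) : fnorm (Matrix.diagonal d * X) ^ 2 ≤ c ^ 2 * fnorm X ^ 2 := by
  simp only [fnorm_sq, Finset.mul_sum]
  refine Finset.sum_le_sum fun i _ => ?_
  have hrow : WithLp.toLp 2 ((Matrix.diagonal d * X) i) = d i • WithLp.toLp 2 (X i) := by
    ext j; simp [Matrix.diagonal_mul]
  rw [hrow, norm_smul, mul_pow, Real.norm_eq_abs]
  gcongr
  exact hd i

end Frobenius

lemma mul_fnorm_sub_sq_le_frob_gradMat_sub {n p : ℕ}
    {g : Fin n → EuclideanSpace ℝ (Fin p) → EuclideanSpace ℝ (Fin p)}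
    {xbar : EuclideanSpace ℝ (Fin p)} {S : Fin n → ℝ} {Sf : ℝ}
    (hqsc : ∀ i y, S i * ‖xbar - y‖ ^ 2 ≤ ⟪g i xbar - g i y, xbar - y⟫)
    (hSf : ∀ i, Sf ≤ S i)
    {xs : Matrix (Fin n) (Fin p) ℝ} (hxs : ∀ i j, xs i j = xbar j)
    (y : Matrix (Fin n) (Fin p) ℝ) :
    Sf * fnorm (xs - y) ^ 2 ≤ frob (gradMat g xs - gradMat g y) (xs - y) := by
  have hrow : ∀ i, WithLp.toLp 2 (xs i) = xbar := fun i => by ext j; exact hxs i j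
  rw [fnorm_sq, frob_eq_sum_inner_rows, Finset.mul_sum]
  refine Finset.sum_le_sum fun i _ => ?_
  have hdiff : WithLp.toLp 2 ((xs - y) i) = xbar - WithLp.toLp 2 (y i) := by
    rw [← hrow i, ← WithLp.toLp_sub]; rfl
  have hgrad_diff : WithLp.toLp 2 ((gradMat g xs - gradMat g y) i)
      = g i xbar - g i (WithLp.toLp 2 (y i)) := by
    ext j; simp [gradMat, hrow]
  rw [hdiff, hgrad_diff]
  calc Sf * ‖xbar - WithLp.toLp 2 (y i)‖ ^ 2
      ≤ S i * ‖xbar - WithLp.toLp 2 (y i)‖ ^ 2 := by gcongr; exact hSf i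
    _ ≤ _ := hqsc i _

theorem normalizedExtraPush_normalized_gradient_strong_monotonicity_general
    {n p : ℕ}
    (g : Fin n → EuclideanSpace ℝ (Fin p) → EuclideanSpace ℝ (Fin p))
    (xbar : EuclideanSpace ℝ (Fin p))
    (S : Fin n → ℝ) (hSpos : ∀ i, 0 < S i)
    (hqsc : ∀ i y, S i * ‖xbar - y‖ ^ 2 ≤ ⟪g i xbar - g i y, xbar - y⟫)
    (Sf : ℝ) (hSf : IsLeast (Set.range S) Sf)
    (φ : Fin n → ℝ) (hφpos : ∀ i, 0 < φ i)
    (D : Matrix (Fin n) (Fin n) ℝ) (hD : D = (n : ℝ) • Matrix.diagonal φ)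
    (φmax : ℝ) (hφmax : IsGreatest (Set.range φ) φmax)
    (σmaxD : ℝ) (hσmaxD : σmaxD = (n : ℝ) * φmax)
    (mubar : ℝ) (hmubar : mubar = Sf / σmaxD ^ 2)
    (xs : Matrix (Fin n) (Fin p) ℝ) (hxs : ∀ i j, xs i j = xbar j)
    (zs : Matrix (Fin n) (Fin p) ℝ) (hzs : zs = D * xs) :
    ∀ z : Matrix (Fin n) (Fin p) ℝ,
      mubar * fnorm (zs - z) ^ 2 ≤
        frob (D⁻¹ * gradMat g (D⁻¹ * zs) - D⁻¹ * gradMat g (D⁻¹ * z)) (zs - z) := by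
  intro z
  obtain ⟨⟨i₀, rfl⟩, hSf_le⟩ := hSf
  set d : Fin n → ℝ := fun i => n * φ i
  have hd_pos : ∀ i, 0 < d i := fun i => mul_pos (Nat.cast_pos.mpr i.pos) (hφpos i)
  have hd_le : ∀ i, |d i| ≤ σmaxD := fun i => by
    rw [abs_of_pos (hd_pos i), hσmaxD]
    exact mul_le_mul_of_nonneg_left (hφmax.2 ⟨i, rfl⟩) (Nat.cast_nonneg n)
  have hσ_pos : 0 < σmaxD := (abs_pos.mpr (hd_pos i₀).ne').trans_le (hd_le i₀)
  obtain rfl : D = diagonal d := by rw [hD, ← diagonal_smul]; rfl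
  have hdet := isUnit_det_diagonal fun i => (hd_pos i).ne'
  set y := (diagonal d)⁻¹ * z with hy
  have hsub : zs - z = diagonal d * (xs - y) := by
    rw [Matrix.mul_sub, ← hzs, hy, mul_nonsing_inv_cancel_left (A := diagonal d) _ hdet]
  rw [hzs, nonsing_inv_mul_cancel_left (A := diagonal d) _ hdet, ← Matrix.mul_sub, ← hzs, hsub,
    frob_diagonal_inv_mul_diagonal_mul fun i => (hd_pos i).ne']
  calc mubar * fnorm (diagonal d * (xs - y)) ^ 2
      ≤ mubar * (σmaxD ^ 2 * fnorm (xs - y) ^ 2) := by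
        gcongr
        · rw [hmubar]; exact div_nonneg (hSpos i₀).le (sq_nonneg _)
        · exact fnorm_diagonal_mul_sq_le hd_le _
    _ = S i₀ * fnorm (xs - y) ^ 2 := by rw [hmubar]; field_simp
    _ ≤ _ := mul_fnorm_sub_sq_le_frob_gradMat_sub hqsc (fun i => hSf_le ⟨i, rfl⟩) hxs y

/-- the map `g(z) := D⁻¹ ∇f(D⁻¹ z)` is quasi-strongly monotone at
`z* := D x*` with constant `μ̄ = S_f / σ_max(D)²`, where `σ_max(D) = n maxᵢ φᵢ`. -/
theorem normalizedExtraPush_normalized_gradient_strong_monotonicity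
    {n p : ℕ} (hn : 1 ≤ n) (hp : 1 ≤ p)
    (f : Fin n → EuclideanSpace ℝ (Fin p) → ℝ)
    (g : Fin n → EuclideanSpace ℝ (Fin p) → EuclideanSpace ℝ (Fin p))
    (hgrad : ∀ i y, HasGradientAt (f i) (g i y) y)
    (xbar : EuclideanSpace ℝ (Fin p))
    (S : Fin n → ℝ) (hSpos : ∀ i, 0 < S i)
    (hqsc : ∀ i y, S i * ‖xbar - y‖ ^ 2 ≤ ⟪g i xbar - g i y, xbar - y⟫)
    (Sf : ℝ) (hSf : IsLeast (Set.range S) Sf)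
    (φ : Fin n → ℝ) (hφpos : ∀ i, 0 < φ i)
    (D : Matrix (Fin n) (Fin n) ℝ) (hD : D = (n : ℝ) • Matrix.diagonal φ)
    (φmax : ℝ) (hφmax : IsGreatest (Set.range φ) φmax)
    (σmaxD : ℝ) (hσmaxD : σmaxD = (n : ℝ) * φmax)
    (mubar : ℝ) (hmubar : mubar = Sf / σmaxD ^ 2)
    (xs : Matrix (Fin n) (Fin p) ℝ) (hxs : ∀ i j, xs i j = xbar j)
    (zs : Matrix (Fin n) (Fin p) ℝ) (hzs : zs = D * xs) :
    ∀ z : Matrix (Fin n) (Fin p) ℝ,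
      mubar * fnorm (zs - z) ^ 2 ≤
        frob (D⁻¹ * gradMat g (D⁻¹ * zs) - D⁻¹ * gradMat g (D⁻¹ * z)) (zs - z) :=
  normalizedExtraPush_normalized_gradient_strong_monotonicity_general g xbar S hSpos hqsc Sf hSf φ
    hφpos D hD φmax hφmax σmaxD hσmaxD mubar hmubar xs hxs zs hzs
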